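/- arXiv:1011.2034 — 3 statements merged into one kernel-verified Lean document; each statement's English description precedes it below -/
import Mathlib

section
/- Let h₁ : ℝ^{K+1} → ℝ, h₂ : ℝ^{K+1} → ℝ^K, and g : ℝ → ℝ^K be Lipschitz continuous functions with Lipschitz constant c. For each pair of continuous functions (y₁, y₂) : [0,T] → ℝ × ℝ^K, there exists a unique pair of continuous functions (x₁, x₂) : [0,T] → ℝ × ℝ^K satisfying x₁(t) = y₁(t) + ∫₀ᵗ h₁(x(s)) ds and x₂(t) = y₂(t) + ∫₀ᵗ h₂(x(s)) ds + g(x₁(t)) for all t ∈ [0,T], where x(s) = (x₁(s), x₂(s)). -/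
/-!
The substitution `z = (x₁, x₂ - g ∘ x₁)` absorbs the non-integral term `g (x₁ t)`: the system
becomes the single Volterra equation `z t = (y₁ t, y₂ t) + ∫₀ᵗ H (z s) ds` with the Lipschitz
field `H p = (h₁ (p.1, p.2 + g p.1), h₂ (p.1, p.2 + g p.1))`. On `C([0, T], E)` the `n`-th
iterate of the Volterra operator is Lipschitz with constant `(L T)ⁿ / n!`, so some iterate is a
contraction and the operator has a unique fixed point.
-/

open Set MeasureTheory Function

theorem ContractingWith.existsUnique_isFixedPt_of_iterate {α : Type*} [MetricSpace α]
    [Nonempty α] [CompleteSpace α] {K : NNReal} {f : α → α} {n : ℕ}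
    (hf : ContractingWith K f^[n]) : ∃! x, IsFixedPt f x :=
  ⟨_, hf.isFixedPt_fixedPoint_iterate, fun _ hx => hf.fixedPoint_unique (hx.iterate n)⟩

theorem intervalIntegral.integral_pair {E F : Type*} [NormedAddCommGroup E] [NormedSpace ℝ E]
    [CompleteSpace E] [NormedAddCommGroup F] [NormedSpace ℝ F] [CompleteSpace F]
    {μ : Measure ℝ} {a b : ℝ} {f : ℝ → E} {g : ℝ → F}
    (hf : IntervalIntegrable f μ a b) (hg : IntervalIntegrable g μ a b) :
    ∫ x in a..b, (f x, g x) ∂μ = (∫ x in a..b, f x ∂μ, ∫ x in a..b, g x ∂μ) := by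
  simp only [intervalIntegral, _root_.integral_pair hf.1 hg.1,
    _root_.integral_pair hf.2 hg.2]
  rfl

namespace Volterra

variable {E : Type*} [NormedAddCommGroup E] [NormedSpace ℝ E] {T : ℝ} (hT : 0 ≤ T) {H : E → E}

noncomputable def map (hH : Continuous H) (y x : C(Icc 0 T, E)) : C(Icc 0 T, E) where
  toFun t := y t + ∫ s in 0..t, H (IccExtend hT x s)
  continuous_toFun := y.continuous.add <|
    (intervalIntegral.continuous_primitive (fun _ _ =>
      (hH.comp x.continuous.Icc_extend').intervalIntegrable _ _) 0).comp continuous_subtype_val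

theorem map_apply (hH : Continuous H) (y x : C(Icc 0 T, E)) (t : Icc 0 T) :
    map hT hH y x t = y t + ∫ s in 0..t, H (IccExtend hT x s) := rfl

variable {L : NNReal}

theorem dist_map_apply_le (hH : LipschitzWith L H) (y u v : C(Icc 0 T, E)) {C : ℝ} {n : ℕ}
    (huv : ∀ s : Icc 0 T, dist (u s) (v s) ≤ C * (s : ℝ) ^ n) (t : Icc 0 T) :
    dist (map hT hH.continuous y u t) (map hT hH.continuous y v t)
      ≤ L * C * (t : ℝ) ^ (n + 1) / (n + 1) := by
  have hint (w : C(Icc 0 T, E)) :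
      IntervalIntegrable (fun s => H (IccExtend hT w s)) volume 0 t :=
    (hH.continuous.comp w.continuous.Icc_extend').intervalIntegrable _ _
  rw [dist_eq_norm, map_apply, map_apply, add_sub_add_left_eq_sub,
    ← intervalIntegral.integral_sub (hint u) (hint v)]
  have hbound : Continuous fun s : ℝ => L * C * s ^ n := by fun_prop
  calc _ ≤ ∫ s in 0..t, L * C * s ^ n := by
        refine intervalIntegral.norm_integral_le_of_norm_le t.2.1
          (.of_forall fun s hs => ?_) (hbound.intervalIntegrable _ _)
        have hs : s ∈ Icc 0 T := ⟨hs.1.le, hs.2.trans t.2.2⟩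
        rw [← dist_eq_norm, IccExtend_of_mem _ _ hs, IccExtend_of_mem _ _ hs, mul_assoc]
        exact hH.dist_le_mul_of_le (huv ⟨s, hs⟩)
    _ = L * C * (t : ℝ) ^ (n + 1) / (n + 1) := by
        rw [intervalIntegral.integral_const_mul, integral_pow]
        ring

theorem dist_map_iterate_apply_le (hH : LipschitzWith L H) (y u v : C(Icc 0 T, E)) (n : ℕ)
    (t : Icc 0 T) :
    dist ((map hT hH.continuous y)^[n] u t) ((map hT hH.continuous y)^[n] v t)
      ≤ (L * t) ^ n / n.factorial * dist u v := by
  induction n generalizing t with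
  | zero => simpa using ContinuousMap.dist_apply_le_dist t
  | succ n ih =>
    rw [iterate_succ_apply', iterate_succ_apply']
    refine (dist_map_apply_le hT hH y _ _ (C := L ^ n / n.factorial * dist u v) (n := n)
      (fun s => (ih s).trans_eq (by ring)) t).trans_eq ?_
    rw [Nat.factorial_succ]
    push_cast
    field_simp
    ring

theorem existsUnique_isFixedPt_map [CompleteSpace E] (hH : LipschitzWith L H)
    (y : C(Icc 0 T, E)) : ∃! x, IsFixedPt (map hT hH.continuous y) x := by
  obtain ⟨n, hn⟩ := (FloorSemiring.tendsto_pow_div_factorial_atTop ((L : ℝ) * T)).eventually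
    (gt_mem_nhds zero_lt_one) |>.exists
  have hC : 0 ≤ ((L : ℝ) * T) ^ n / n.factorial := by positivity
  refine ContractingWith.existsUnique_isFixedPt_of_iterate (K := ⟨_, hC⟩) (n := n)
    ⟨hn, LipschitzWith.of_dist_le_mul fun u v => ?_⟩
  refine (ContinuousMap.dist_le (by positivity)).2 fun t => ?_
  refine (dist_map_iterate_apply_le hT hH y u v n t).trans ?_
  have ht : 0 ≤ (t : ℝ) := t.2.1
  show _ ≤ ((L : ℝ) * T) ^ n / n.factorial * dist u v
  gcongr
  exact t.2.2

def IsSolution (T : ℝ) (H : E → E) (y x : ℝ → E) : Prop :=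
  ∀ t ∈ Icc 0 T, x t = y t + ∫ s in 0..t, H (x s)

theorem isFixedPt_map_iff_isSolution (hH : Continuous H) {y x : ℝ → E}
    (hy : ContinuousOn y (Icc 0 T)) (hx : ContinuousOn x (Icc 0 T)) :
    IsFixedPt (map hT hH ⟨_, hy.domRestrict⟩) ⟨_, hx.domRestrict⟩ ↔ IsSolution T H y x := by
  have hint (t : Icc 0 T) : ∫ s in 0..t, H (IccExtend hT ((Icc 0 T).domRestrict x) s)
      = ∫ s in 0..t, H (x s) := by
    refine intervalIntegral.integral_congr fun s hs => ?_
    rw [uIcc_of_le t.2.1] at hs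
    rw [IccExtend_of_mem _ _ ⟨hs.1, hs.2.trans t.2.2⟩]
    rfl
  simp only [IsFixedPt, ContinuousMap.ext_iff, map_apply, ContinuousMap.coe_mk, hint, IsSolution,
    Subtype.forall]
  exact forall₂_congr fun _ _ => eq_comm

theorem existsUnique_isSolution [CompleteSpace E] (hT : 0 ≤ T) (hH : LipschitzWith L H)
    {y : ℝ → E} (hy : ContinuousOn y (Icc 0 T)) :
    ∃ x, ContinuousOn x (Icc 0 T) ∧ IsSolution T H y x ∧
      ∀ x', ContinuousOn x' (Icc 0 T) → IsSolution T H y x' → EqOn x' x (Icc 0 T) := by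
  obtain ⟨z, hz, hz_unique⟩ := existsUnique_isFixedPt_map hT hH ⟨_, hy.domRestrict⟩
  have hzc : Continuous (IccExtend hT z) := z.continuous.Icc_extend'
  have hz_restrict : (⟨_, hzc.continuousOn.domRestrict⟩ : C(Icc 0 T, E)) = z :=
    ContinuousMap.ext fun t => IccExtend_val hT z t
  refine ⟨IccExtend hT z, hzc.continuousOn,
    (isFixedPt_map_iff_isSolution hT hH.continuous hy hzc.continuousOn).1 (by rwa [hz_restrict]),
    fun x' hx' hsol t ht => ?_⟩
  have := hz_unique _ ((isFixedPt_map_iff_isSolution hT hH.continuous hy hx').2 hsol)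
  rw [IccExtend_of_mem hT z ht, ← this]
  rfl

end Volterra

def shear {α β : Type*} [Add β] (g : α → β) (p : α × β) : α × β := (p.1, p.2 + g p.1)

theorem LipschitzWith.shear {α β : Type*} [PseudoEMetricSpace α] [SeminormedAddCommGroup β]
    {c : NNReal} {g : α → β} (hg : LipschitzWith c g) :
    LipschitzWith (max 1 (1 + c)) (shear g) :=
  LipschitzWith.prod_fst.prodMk <|
    LipschitzWith.prod_snd.add (by simpa [comp_def] using hg.comp LipschitzWith.prod_fst)

section System

variable {E₁ E₂ : Type*} [NormedAddCommGroup E₁] [NormedSpace ℝ E₁]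
  [NormedAddCommGroup E₂] [NormedSpace ℝ E₂]

def SolvesSystem (T : ℝ) (h₁ : E₁ × E₂ → E₁) (h₂ : E₁ × E₂ → E₂) (g : E₁ → E₂)
    (y₁ : ℝ → E₁) (y₂ : ℝ → E₂) (x₁ : ℝ → E₁) (x₂ : ℝ → E₂) : Prop :=
  (∀ t ∈ Icc (0:ℝ) T, x₁ t = y₁ t + ∫ s in (0:ℝ)..t, h₁ (x₁ s, x₂ s)) ∧
    (∀ t ∈ Icc (0:ℝ) T, x₂ t = y₂ t + (∫ s in (0:ℝ)..t, h₂ (x₁ s, x₂ s)) + g (x₁ t))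

theorem isSolution_iff_solvesSystem [CompleteSpace E₁] [CompleteSpace E₂] {T : ℝ}
    {h₁ : E₁ × E₂ → E₁} {h₂ : E₁ × E₂ → E₂} {g : E₁ → E₂} (hh₁ : Continuous h₁)
    (hh₂ : Continuous h₂) (y₁ : ℝ → E₁) (y₂ : ℝ → E₂) {x₁ : ℝ → E₁} {x₂ : ℝ → E₂}
    (hx₁ : ContinuousOn x₁ (Icc 0 T)) (hx₂ : ContinuousOn x₂ (Icc 0 T)) {z : ℝ → E₁ × E₂}
    (hz : ∀ t, z t = (x₁ t, x₂ t - g (x₁ t))) :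
    Volterra.IsSolution T (fun p => (h₁ (shear g p), h₂ (shear g p))) (fun t => (y₁ t, y₂ t)) z ↔
      SolvesSystem T h₁ h₂ g y₁ y₂ x₁ x₂ := by
  simp only [Volterra.IsSolution, SolvesSystem, hz, shear, sub_add_cancel, ← forall₂_and]
  refine forall₂_congr fun t ht => ?_
  have hsub : uIcc 0 t ⊆ Icc 0 T := uIcc_subset_Icc ⟨le_rfl, ht.1.trans ht.2⟩ ht
  have hx := hx₁.prodMk hx₂
  rw [intervalIntegral.integral_pair (f := fun s => h₁ (x₁ s, x₂ s))
    (g := fun s => h₂ (x₁ s, x₂ s)) ((hh₁.comp_continuousOn hx).mono hsub).intervalIntegrable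
      ((hh₂.comp_continuousOn hx).mono hsub).intervalIntegrable, Prod.ext_iff, sub_eq_iff_eq_add]
  rfl

end System

theorem exists_unique_solution_general {K : ℕ} (T : ℝ) (hT : 0 < T) (c : NNReal)
    (h₁ : ℝ × (Fin K → ℝ) → ℝ) (h₂ : ℝ × (Fin K → ℝ) → Fin K → ℝ) (g : ℝ → Fin K → ℝ)
    (hh₁ : LipschitzWith c h₁) (hh₂ : LipschitzWith c h₂) (hg : LipschitzWith c g)
    (y₁ : ℝ → ℝ) (y₂ : ℝ → Fin K → ℝ)
    (hy₁ : ContinuousOn y₁ (Icc 0 T)) (hy₂ : ContinuousOn y₂ (Icc 0 T)) :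
    ∃ x₁ : ℝ → ℝ, ∃ x₂ : ℝ → Fin K → ℝ,
      ContinuousOn x₁ (Icc 0 T) ∧ ContinuousOn x₂ (Icc 0 T) ∧
      (∀ t ∈ Icc (0:ℝ) T, x₁ t = y₁ t + ∫ s in (0:ℝ)..t, h₁ (x₁ s, x₂ s)) ∧
      (∀ t ∈ Icc (0:ℝ) T, x₂ t = y₂ t + (∫ s in (0:ℝ)..t, h₂ (x₁ s, x₂ s)) + g (x₁ t)) ∧
      (∀ x₁' : ℝ → ℝ, ∀ x₂' : ℝ → Fin K → ℝ,
        ContinuousOn x₁' (Icc 0 T) → ContinuousOn x₂' (Icc 0 T) →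
        (∀ t ∈ Icc (0:ℝ) T, x₁' t = y₁ t + ∫ s in (0:ℝ)..t, h₁ (x₁' s, x₂' s)) →
        (∀ t ∈ Icc (0:ℝ) T, x₂' t = y₂ t + (∫ s in (0:ℝ)..t, h₂ (x₁' s, x₂' s)) + g (x₁' t)) →
        ∀ t ∈ Icc (0:ℝ) T, x₁' t = x₁ t ∧ x₂' t = x₂ t) := by
  have hH := (hh₁.prodMk hh₂).comp hg.shear
  obtain ⟨z, hzc, hz, hz_unique⟩ := Volterra.existsUnique_isSolution hT.le hH (hy₁.prodMk hy₂)
  have hx₁ : ContinuousOn (fun t => (z t).1) (Icc 0 T) := continuous_fst.comp_continuousOn hzc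
  have hx₂ : ContinuousOn (fun t => (z t).2 + g (z t).1) (Icc 0 T) :=
    (continuous_snd.comp_continuousOn hzc).add (hg.continuous.comp_continuousOn hx₁)
  obtain ⟨heq₁, heq₂⟩ := (isSolution_iff_solvesSystem hh₁.continuous hh₂.continuous y₁ y₂
    hx₁ hx₂ fun _ => by simp).1 hz
  refine ⟨_, _, hx₁, hx₂, heq₁, heq₂, fun x₁' x₂' hx₁' hx₂' heq₁' heq₂' t ht => ?_⟩
  have hz'c := hx₁'.prodMk (hx₂'.sub (hg.continuous.comp_continuousOn hx₁'))
  have hz' := (isSolution_iff_solvesSystem hh₁.continuous hh₂.continuous y₁ y₂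
    hx₁' hx₂' fun _ => rfl).2 ⟨heq₁', heq₂'⟩
  obtain ⟨h₁t, h₂t⟩ : x₁' t = (z t).1 ∧ x₂' t - g (x₁' t) = (z t).2 :=
    Prod.ext_iff.1 (hz_unique _ hz'c hz' ht)
  exact ⟨h₁t, by rw [← h₂t, ← h₁t, sub_add_cancel]⟩

/-- existence and uniqueness of continuous solutions of the integral
equations `x₁(t) = y₁(t) + ∫₀ᵗ h₁(x(s)) ds` and
`x₂(t) = y₂(t) + ∫₀ᵗ h₂(x(s)) ds + g(x₁(t))` on `[0, T]`, for Lipschitz `h₁, h₂, g`. -/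
theorem exists_unique_solution {K : ℕ} (hK : 1 ≤ K) (T : ℝ) (hT : 0 < T) (c : NNReal)
    (h₁ : ℝ × (Fin K → ℝ) → ℝ) (h₂ : ℝ × (Fin K → ℝ) → Fin K → ℝ) (g : ℝ → Fin K → ℝ)
    (hh₁ : LipschitzWith c h₁) (hh₂ : LipschitzWith c h₂) (hg : LipschitzWith c g)
    (y₁ : ℝ → ℝ) (y₂ : ℝ → Fin K → ℝ)
    (hy₁ : ContinuousOn y₁ (Icc 0 T)) (hy₂ : ContinuousOn y₂ (Icc 0 T)) :
    ∃ x₁ : ℝ → ℝ, ∃ x₂ : ℝ → Fin K → ℝ,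
      ContinuousOn x₁ (Icc 0 T) ∧ ContinuousOn x₂ (Icc 0 T) ∧
      (∀ t ∈ Icc (0:ℝ) T, x₁ t = y₁ t + ∫ s in (0:ℝ)..t, h₁ (x₁ s, x₂ s)) ∧
      (∀ t ∈ Icc (0:ℝ) T, x₂ t = y₂ t + (∫ s in (0:ℝ)..t, h₂ (x₁ s, x₂ s)) + g (x₁ t)) ∧
      (∀ x₁' : ℝ → ℝ, ∀ x₂' : ℝ → Fin K → ℝ,
        ContinuousOn x₁' (Icc 0 T) → ContinuousOn x₂' (Icc 0 T) →
        (∀ t ∈ Icc (0:ℝ) T, x₁' t = y₁ t + ∫ s in (0:ℝ)..t, h₁ (x₁' s, x₂' s)) →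
        (∀ t ∈ Icc (0:ℝ) T, x₂' t = y₂ t + (∫ s in (0:ℝ)..t, h₂ (x₁' s, x₂' s)) + g (x₁' t)) →
        ∀ t ∈ Icc (0:ℝ) T, x₁' t = x₁ t ∧ x₂' t = x₂ t) :=
  exists_unique_solution_general T hT c h₁ h₂ g hh₁ hh₂ hg y₁ y₂ hy₁ hy₂
end

section
/- Let h₁, h₂, g be Lipschitz continuous with constant c, and let Υ(y) denote the unique solution x to x₁(t) = y₁(t) + ∫₀ᵗ h₁(x(s)) ds, x₂(t) = y₂(t) + ∫₀ᵗ h₂(x(s)) ds + g(x₁(t)) on [0,T] for continuous input y. Then Υ is Lipschitz continuous with respect to the supremum norm: for all continuous y, ỹ on [0,T], sup_{0≤t≤T} |Υ(y)(t) − Υ(ỹ)(t)| ≤ (1+c)·exp((c+c²)T)·sup_{0≤t≤T} |y(t) − ỹ(t)|. -/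
/-!
Put `X = (x₁, x₂)`, `X̃ = (x̃₁, x̃₂)` and `v(t) = ‖X(t) - X̃(t)‖` (maximum norm). The Lipschitz
bounds on the integrands give `|x₁ - x̃₁|(t) ≤ M + c ∫₀ᵗ v`. The non-integral term `g(x₁(t))` of
the second equation is controlled through this first estimate, which gives
`‖x₂ - x̃₂‖(t) ≤ (1 + c) M + (c + c²) ∫₀ᵗ v`. Hence `v(t) ≤ (1 + c) M + (c + c²) ∫₀ᵗ v`, and
Grönwall's inequality in integral form gives `v(t) ≤ (1 + c) M exp((c + c²) t)`.
-/

open Set Real MeasureTheory intervalIntegral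
open scoped NNReal

theorem add_mul_gronwallBound_zero (A B x : ℝ) :
    A + B * gronwallBound 0 B A x = A * exp (B * x) := by
  rcases eq_or_ne B 0 with rfl | hB
  · simp [gronwallBound_K0]
  · rw [gronwallBound_of_K_ne_0 hB]
    field_simp
    ring

theorem le_mul_exp_of_le_add_mul_integral {v : ℝ → ℝ} {a b A B : ℝ}
    (hv : ContinuousOn v (Icc a b)) (hB : 0 ≤ B)
    (hle : ∀ t ∈ Icc a b, v t ≤ A + B * ∫ s in a..t, v s) :
    ∀ t ∈ Icc a b, v t ≤ A * exp (B * (t - a)) := by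
  set F : ℝ → ℝ := fun t => ∫ s in a..t, v s
  have hF : ∀ t ∈ Icc a b, HasDerivWithinAt F (v t) (Icc a b) t := fun t ht =>
    have : Fact (t ∈ Icc a b) := ⟨ht⟩
    integral_hasDerivWithinAt_right
      ((hv.mono (uIcc_subset_Icc (left_mem_Icc.2 (ht.1.trans ht.2)) ht)).intervalIntegrable)
      (hv.stronglyMeasurableAtFilter_nhdsWithin measurableSet_Icc t) (hv t ht)
  have hF_le : ∀ t ∈ Icc a b, F t ≤ gronwallBound 0 B A (t - a) :=
    le_gronwallBound_of_liminf_deriv_right_le (fun t ht => (hF t ht).continuousWithinAt)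
      (fun t ht _ hr => ((hF t (Ico_subset_Icc_self ht)).mono_of_mem_nhdsWithin
        (Icc_mem_nhdsGE_of_mem ht)).liminf_right_slope_le hr)
      (by simp [F]) (fun t ht => by linarith [hle t (Ico_subset_Icc_self ht)])
  intro t ht
  calc v t ≤ A + B * F t := hle t ht
    _ ≤ A + B * gronwallBound 0 B A (t - a) := by gcongr; exact hF_le t ht
    _ = A * exp (B * (t - a)) := add_mul_gronwallBound_zero A B (t - a)

theorem dist_add_integral_le {E F : Type*} [PseudoMetricSpace E] [NormedAddCommGroup F]
    [NormedSpace ℝ F] {h : E → F} {c : ℝ≥0} (hh : LipschitzWith c h) {u w : ℝ → E} {a t : ℝ}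
    (hat : a ≤ t) (hu : ContinuousOn u (Icc a t)) (hw : ContinuousOn w (Icc a t)) (p q : F) :
    dist (p + ∫ s in a..t, h (u s)) (q + ∫ s in a..t, h (w s))
      ≤ dist p q + c * ∫ s in a..t, dist (u s) (w s) := by
  have hint : ∀ {z : ℝ → E}, ContinuousOn z (Icc a t) →
      IntervalIntegrable (fun s => h (z s)) volume a t := fun hz =>
    (hh.continuous.comp_continuousOn hz).intervalIntegrable_of_Icc hat
  have hdist : IntervalIntegrable (fun s => dist (u s) (w s)) volume a t :=
    (continuous_dist.comp_continuousOn (hu.prodMk hw)).intervalIntegrable_of_Icc hat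
  refine (dist_add_add_le _ _ _ _).trans (add_le_add le_rfl ?_)
  rw [dist_eq_norm, ← intervalIntegral.integral_sub (hint hu) (hint hw),
    ← intervalIntegral.integral_const_mul]
  refine norm_integral_le_of_norm_le hat (Filter.Eventually.of_forall fun s _ => ?_)
    (hdist.const_mul _)
  rw [← dist_eq_norm]
  exact hh.dist_le_mul _ _

section TriangularSystem

variable {F₁ F₂ : Type*} [NormedAddCommGroup F₁] [NormedSpace ℝ F₁] [NormedAddCommGroup F₂]
  [NormedSpace ℝ F₂] {c : ℝ≥0} {h₁ : F₁ × F₂ → F₁} {h₂ : F₁ × F₂ → F₂} {g : F₁ → F₂} {T M : ℝ}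
  {y₁ ty₁ x₁ tx₁ : ℝ → F₁} {y₂ ty₂ x₂ tx₂ : ℝ → F₂}

theorem dist_solutions_le_add_mul_integral (hh₁ : LipschitzWith c h₁)
    (hh₂ : LipschitzWith c h₂) (hg : LipschitzWith c g)
    (hx₁ : ContinuousOn x₁ (Icc 0 T)) (hx₂ : ContinuousOn x₂ (Icc 0 T))
    (htx₁ : ContinuousOn tx₁ (Icc 0 T)) (htx₂ : ContinuousOn tx₂ (Icc 0 T))
    (hsol₁ : ∀ t ∈ Icc (0:ℝ) T, x₁ t = y₁ t + ∫ s in (0:ℝ)..t, h₁ (x₁ s, x₂ s))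
    (hsol₂ : ∀ t ∈ Icc (0:ℝ) T, x₂ t = y₂ t + (∫ s in (0:ℝ)..t, h₂ (x₁ s, x₂ s)) + g (x₁ t))
    (htsol₁ : ∀ t ∈ Icc (0:ℝ) T, tx₁ t = ty₁ t + ∫ s in (0:ℝ)..t, h₁ (tx₁ s, tx₂ s))
    (htsol₂ : ∀ t ∈ Icc (0:ℝ) T,
      tx₂ t = ty₂ t + (∫ s in (0:ℝ)..t, h₂ (tx₁ s, tx₂ s)) + g (tx₁ t))
    (hM : ∀ t ∈ Icc (0:ℝ) T, dist (y₁ t, y₂ t) (ty₁ t, ty₂ t) ≤ M) {t : ℝ} (ht : t ∈ Icc 0 T) :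
    dist (x₁ t, x₂ t) (tx₁ t, tx₂ t)
      ≤ (1 + c) * M + (c + c ^ 2) * ∫ s in (0:ℝ)..t, dist (x₁ s, x₂ s) (tx₁ s, tx₂ s) := by
  set I := ∫ s in (0:ℝ)..t, dist (x₁ s, x₂ s) (tx₁ s, tx₂ s)
  have hsub : Icc 0 t ⊆ Icc 0 T := Icc_subset_Icc_right ht.2
  have hX := (hx₁.prodMk hx₂).mono hsub
  have hX_t := (htx₁.prodMk htx₂).mono hsub
  obtain ⟨hM₁, hM₂⟩ : dist (y₁ t) (ty₁ t) ≤ M ∧ dist (y₂ t) (ty₂ t) ≤ M :=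
    max_le_iff.1 (hM t ht)
  have hI : 0 ≤ I := integral_nonneg ht.1 fun _ _ => dist_nonneg
  have hM0 : 0 ≤ M := dist_nonneg.trans hM₁
  have h₁_le : dist (x₁ t) (tx₁ t) ≤ M + c * I := by
    rw [hsol₁ t ht, htsol₁ t ht]
    exact (dist_add_integral_le hh₁ ht.1 hX hX_t _ _).trans (by gcongr)
  have h₂_le : dist (x₂ t) (tx₂ t) ≤ M + c * I + c * dist (x₁ t) (tx₁ t) := by
    rw [hsol₂ t ht, htsol₂ t ht, add_right_comm, add_right_comm (ty₂ t)]
    refine (dist_add_integral_le hh₂ ht.1 hX hX_t _ _).trans ?_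
    have := (dist_add_add_le (y₂ t) (g (x₁ t)) (ty₂ t) (g (tx₁ t))).trans
      (add_le_add hM₂ (hg.dist_le_mul _ _))
    linarith
  have hcM : 0 ≤ c * M := mul_nonneg c.coe_nonneg hM0
  have hc2I : 0 ≤ c ^ 2 * I := mul_nonneg (sq_nonneg _) hI
  have hg_le : c * dist (x₁ t) (tx₁ t) ≤ c * (M + c * I) := by gcongr
  rw [Prod.dist_eq]
  exact max_le (by linarith) (by linarith)

end TriangularSystem

theorem solution_map_lipschitz_general {K : ℕ} (T : ℝ) (c : NNReal)
    (h₁ : ℝ × (Fin K → ℝ) → ℝ) (h₂ : ℝ × (Fin K → ℝ) → Fin K → ℝ) (g : ℝ → Fin K → ℝ)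
    (hh₁ : LipschitzWith c h₁) (hh₂ : LipschitzWith c h₂) (hg : LipschitzWith c g)
    (y₁ ty₁ x₁ tx₁ : ℝ → ℝ) (y₂ ty₂ x₂ tx₂ : ℝ → Fin K → ℝ)
    (hx₁ : ContinuousOn x₁ (Icc 0 T)) (hx₂ : ContinuousOn x₂ (Icc 0 T))
    (htx₁ : ContinuousOn tx₁ (Icc 0 T)) (htx₂ : ContinuousOn tx₂ (Icc 0 T))
    (hsol₁ : ∀ t ∈ Icc (0:ℝ) T, x₁ t = y₁ t + ∫ s in (0:ℝ)..t, h₁ (x₁ s, x₂ s))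
    (hsol₂ : ∀ t ∈ Icc (0:ℝ) T, x₂ t = y₂ t + (∫ s in (0:ℝ)..t, h₂ (x₁ s, x₂ s)) + g (x₁ t))
    (htsol₁ : ∀ t ∈ Icc (0:ℝ) T, tx₁ t = ty₁ t + ∫ s in (0:ℝ)..t, h₁ (tx₁ s, tx₂ s))
    (htsol₂ : ∀ t ∈ Icc (0:ℝ) T,
      tx₂ t = ty₂ t + (∫ s in (0:ℝ)..t, h₂ (tx₁ s, tx₂ s)) + g (tx₁ t))
    (M : ℝ) (hM : ∀ t ∈ Icc (0:ℝ) T, max |y₁ t - ty₁ t| ‖y₂ t - ty₂ t‖ ≤ M) :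
    ∀ t ∈ Icc (0:ℝ) T,
      max |x₁ t - tx₁ t| ‖x₂ t - tx₂ t‖
        ≤ (1 + (c : ℝ)) * Real.exp (((c : ℝ) + (c : ℝ) ^ 2) * T) * M := by
  have hdist : ∀ (p q : ℝ) (u w : Fin K → ℝ), max |p - q| ‖u - w‖ = dist (p, u) (q, w) :=
    fun p q u w => by rw [Prod.dist_eq, Real.dist_eq, dist_eq_norm]
  simp only [hdist] at hM ⊢
  intro t ht
  have hM0 : 0 ≤ M := dist_nonneg.trans (hM t ht)
  have hv : ContinuousOn (fun s => dist (x₁ s, x₂ s) (tx₁ s, tx₂ s)) (Icc 0 T) :=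
    continuous_dist.comp_continuousOn ((hx₁.prodMk hx₂).prodMk (htx₁.prodMk htx₂))
  have hle := fun s (hs : s ∈ Icc 0 T) => dist_solutions_le_add_mul_integral hh₁ hh₂ hg
    hx₁ hx₂ htx₁ htx₂ hsol₁ hsol₂ htsol₁ htsol₂ hM hs
  calc dist (x₁ t, x₂ t) (tx₁ t, tx₂ t)
      ≤ (1 + c) * M * exp ((c + c ^ 2) * (t - 0)) :=
        le_mul_exp_of_le_add_mul_integral hv (by positivity) hle t ht
    _ ≤ (1 + c) * exp ((c + c ^ 2) * T) * M := by
      rw [mul_right_comm, sub_zero]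
      gcongr
      exact ht.2

/-- the solution map `Υ` of the integral equations is Lipschitz in the
supremum norm with constant `(1 + c) · exp((c + c²) T)`. -/
theorem solution_map_lipschitz {K : ℕ} (hK : 1 ≤ K) (T : ℝ) (hT : 0 < T) (c : NNReal)
    (h₁ : ℝ × (Fin K → ℝ) → ℝ) (h₂ : ℝ × (Fin K → ℝ) → Fin K → ℝ) (g : ℝ → Fin K → ℝ)
    (hh₁ : LipschitzWith c h₁) (hh₂ : LipschitzWith c h₂) (hg : LipschitzWith c g)
    (y₁ ty₁ x₁ tx₁ : ℝ → ℝ) (y₂ ty₂ x₂ tx₂ : ℝ → Fin K → ℝ)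
    (hy₁ : ContinuousOn y₁ (Icc 0 T)) (hy₂ : ContinuousOn y₂ (Icc 0 T))
    (hty₁ : ContinuousOn ty₁ (Icc 0 T)) (hty₂ : ContinuousOn ty₂ (Icc 0 T))
    (hx₁ : ContinuousOn x₁ (Icc 0 T)) (hx₂ : ContinuousOn x₂ (Icc 0 T))
    (htx₁ : ContinuousOn tx₁ (Icc 0 T)) (htx₂ : ContinuousOn tx₂ (Icc 0 T))
    (hsol₁ : ∀ t ∈ Icc (0:ℝ) T, x₁ t = y₁ t + ∫ s in (0:ℝ)..t, h₁ (x₁ s, x₂ s))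
    (hsol₂ : ∀ t ∈ Icc (0:ℝ) T, x₂ t = y₂ t + (∫ s in (0:ℝ)..t, h₂ (x₁ s, x₂ s)) + g (x₁ t))
    (htsol₁ : ∀ t ∈ Icc (0:ℝ) T, tx₁ t = ty₁ t + ∫ s in (0:ℝ)..t, h₁ (tx₁ s, tx₂ s))
    (htsol₂ : ∀ t ∈ Icc (0:ℝ) T,
      tx₂ t = ty₂ t + (∫ s in (0:ℝ)..t, h₂ (tx₁ s, tx₂ s)) + g (tx₁ t))
    (M : ℝ) (hM : ∀ t ∈ Icc (0:ℝ) T, max |y₁ t - ty₁ t| ‖y₂ t - ty₂ t‖ ≤ M) :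
    ∀ t ∈ Icc (0:ℝ) T,
      max |x₁ t - tx₁ t| ‖x₂ t - tx₂ t‖
        ≤ (1 + (c : ℝ)) * Real.exp (((c : ℝ) + (c : ℝ) ^ 2) * T) * M :=
  solution_map_lipschitz_general T c h₁ h₂ g hh₁ hh₂ hg y₁ ty₁ x₁ tx₁ y₂ ty₂ x₂ tx₂ hx₁ hx₂ htx₁
    htx₂ hsol₁ hsol₂ htsol₁ htsol₂ M hM
end

section
/- Let α ≥ 0, p a K-dimensional probability vector, and R a K×K matrix. For each continuous (u, v) : [0,T] → ℝ × ℝ^K there exists a unique continuous (x, z) : [0,T] → ℝ × ℝ^K satisfying x(t) = u(t) − α∫₀ᵗ (x(s))⁺ ds − eᵀR∫₀ᵗ z(s) ds and z(t) = v(t) − p(x(t))⁻ − (I − p eᵀ)R∫₀ᵗ z(s) ds for all t ∈ [0,T]. -/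
/-!
Writing `w = (x, z)`, a solution is a fixed point of the map `Φ` that sends `w` to
`t ↦ (u t + ∫₀ᵗ h₁ w, v t + g (u t + ∫₀ᵗ h₁ w) + ∫₀ᵗ h₂ w)`; substituting the first equation into
the second removes the instantaneous dependence of `z t` on `x t`. Since `h₁`, `h₂` and `g` are
Lipschitz, `dist (Φ w t) (Φ w' t) ≤ L ∫₀ᵗ dist (w s) (w' s)`, so by induction `Φ^[n]` is Lipschitz
with constant `(L T)ⁿ / n!` for the uniform metric on `C([0, T])`. For large `n` this is a
contraction, and Banach's fixed point theorem applied to `Φ^[n]` gives a unique fixed point of `Φ`.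
-/

open Set Function MeasureTheory Matrix
open scoped NNReal

section Volterra

variable {E : Type*} [MetricSpace E] {T : ℝ}

def VolterraLipschitzWith (hT : 0 ≤ T) (L : ℝ≥0) (F : C(Icc 0 T, E) → C(Icc 0 T, E)) : Prop :=
  ∀ f g (t : Icc 0 T),
    dist (F f t) (F g t) ≤ L * ∫ s in 0..t, dist (IccExtend hT f s) (IccExtend hT g s)

namespace VolterraLipschitzWith

variable {hT : 0 ≤ T} {L : ℝ≥0} {F : C(Icc 0 T, E) → C(Icc 0 T, E)}

theorem dist_iterate_apply_le (hF : VolterraLipschitzWith hT L F) (f g : C(Icc 0 T, E)) (n : ℕ)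
    (t : Icc 0 T) :
    dist (F^[n] f t) (F^[n] g t) ≤ (L * t) ^ n / n.factorial * dist f g := by
  induction n generalizing t with
  | zero => simpa using ContinuousMap.dist_apply_le_dist t
  | succ n ih =>
    have ht : (0 : ℝ) ≤ t := t.2.1
    have hbound : ∀ s ∈ Icc (0 : ℝ) t, dist (IccExtend hT (F^[n] f) s) (IccExtend hT (F^[n] g) s)
        ≤ L ^ n / n.factorial * dist f g * s ^ n := fun s hs => by
      have hsT : s ∈ Icc 0 T := ⟨hs.1, hs.2.trans t.2.2⟩
      rw [IccExtend_of_mem _ _ hsT, IccExtend_of_mem _ _ hsT]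
      exact (ih ⟨s, hsT⟩).trans_eq (by rw [mul_pow]; ring)
    have hcont : Continuous fun s => dist (IccExtend hT (F^[n] f) s) (IccExtend hT (F^[n] g) s) :=
      (F^[n] f).continuous.Icc_extend'.dist (F^[n] g).continuous.Icc_extend'
    calc dist (F^[n + 1] f t) (F^[n + 1] g t)
        ≤ L * ∫ s in 0..t, dist (IccExtend hT (F^[n] f) s) (IccExtend hT (F^[n] g) s) := by
          rw [iterate_succ_apply', iterate_succ_apply']
          exact hF _ _ t
      _ ≤ L * ∫ s in 0..t, L ^ n / n.factorial * dist f g * s ^ n := by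
          gcongr
          exact intervalIntegral.integral_mono_on ht (hcont.intervalIntegrable _ _)
            (Continuous.intervalIntegrable (by fun_prop) _ _) hbound
      _ = (L * t) ^ (n + 1) / (n + 1).factorial * dist f g := by
          rw [intervalIntegral.integral_const_mul, integral_pow, Nat.factorial_succ]
          push_cast
          field_simp
          ring

theorem exists_unique_isFixedPt [CompleteSpace E] [Nonempty E]
    (hF : VolterraLipschitzWith hT L F) : ∃! f, IsFixedPt F f := by
  obtain ⟨n, hn⟩ : ∃ n : ℕ, (L * T) ^ n / n.factorial < 1 :=
    ((FloorSemiring.tendsto_pow_div_factorial_atTop _).eventually_lt_const one_pos).exists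
  have : Nonempty C(Icc 0 T, E) := ⟨.const _ (Classical.arbitrary E)⟩
  have hK : 0 ≤ (L * T) ^ n / n.factorial := by positivity
  have hcontr : ContractingWith ⟨_, hK⟩ F^[n] := by
    refine ⟨hn, LipschitzWith.of_dist_le_mul fun f g => ?_⟩
    refine (ContinuousMap.dist_le (by positivity)).2 fun t => ?_
    refine (hF.dist_iterate_apply_le f g n t).trans ?_
    show _ ≤ (L * T) ^ n / n.factorial * dist f g
    have ht : (0 : ℝ) ≤ t := t.2.1
    gcongr
    exact t.2.2
  exact ⟨_, hcontr.isFixedPt_fixedPoint_iterate, fun f hf => hcontr.fixedPoint_unique (hf.iterate n)⟩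

end VolterraLipschitzWith

end Volterra

theorem LipschitzWith.dist_intervalIntegral_comp_le {E F : Type*} [PseudoMetricSpace E]
    [NormedAddCommGroup F] [NormedSpace ℝ F] {K : ℝ≥0} {h : E → F} (hh : LipschitzWith K h)
    {φ ψ : ℝ → E} (hφ : Continuous φ) (hψ : Continuous ψ) {a b : ℝ} (hab : a ≤ b) :
    dist (∫ s in a..b, h (φ s)) (∫ s in a..b, h (ψ s)) ≤ K * ∫ s in a..b, dist (φ s) (ψ s) := by
  have hφ' : Continuous fun s => h (φ s) := hh.continuous.comp hφ
  have hψ' : Continuous fun s => h (ψ s) := hh.continuous.comp hψ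
  rw [dist_eq_norm, ← intervalIntegral.integral_sub (hφ'.intervalIntegrable _ _)
    (hψ'.intervalIntegrable _ _), ← intervalIntegral.integral_const_mul]
  refine (intervalIntegral.norm_integral_le_integral_norm hab).trans
    (intervalIntegral.integral_mono_on hab ((hφ'.sub hψ').norm.intervalIntegrable _ _)
      ((continuous_const.mul (hφ.dist hψ)).intervalIntegrable _ _) fun s _ => ?_)
  rw [← dist_eq_norm]
  exact hh.dist_le_mul _ _

namespace IntegralSystem

variable {X Z : Type*} [NormedAddCommGroup X] [NormedSpace ℝ X]
  [NormedAddCommGroup Z] [NormedSpace ℝ Z]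
  {T : ℝ} {u : ℝ → X} {v : ℝ → Z} {h₁ : X × Z → X} {h₂ : X × Z → Z} {g : X → Z}

variable (T u v h₁ h₂ g) in
def IsSolution (x : ℝ → X) (z : ℝ → Z) : Prop :=
  ∀ t ∈ Icc 0 T, (x t = u t + ∫ s in 0..t, h₁ (x s, z s)) ∧
    z t = v t + g (x t) + ∫ s in 0..t, h₂ (x s, z s)

theorem IsSolution.congr {x x' : ℝ → X} {z z' : ℝ → Z} (hsol : IsSolution T u v h₁ h₂ g x z)
    (hx : EqOn x x' (Icc 0 T)) (hz : EqOn z z' (Icc 0 T)) : IsSolution T u v h₁ h₂ g x' z' := by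
  intro t ht
  have hsub : uIcc 0 t ⊆ Icc 0 T := uIcc_subset_Icc (left_mem_Icc.2 (ht.1.trans ht.2)) ht
  have hw : EqOn (fun s => (x s, z s)) (fun s => (x' s, z' s)) (uIcc 0 t) := fun s hs =>
    Prod.ext (hx (hsub hs)) (hz (hsub hs))
  rw [← hx ht, ← hz ht, ← intervalIntegral.integral_congr fun s hs => congrArg h₁ (hw hs),
    ← intervalIntegral.integral_congr fun s hs => congrArg h₂ (hw hs)]
  exact hsol t ht

noncomputable def picardMap (hT : 0 ≤ T) (hu : ContinuousOn u (Icc 0 T))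
    (hv : ContinuousOn v (Icc 0 T)) (hh₁ : Continuous h₁) (hh₂ : Continuous h₂)
    (hg : Continuous g) (w : C(Icc 0 T, X × Z)) : C(Icc 0 T, X × Z) where
  toFun t := (u t + ∫ s in 0..t, h₁ (IccExtend hT w s),
    v t + g (u t + ∫ s in 0..t, h₁ (IccExtend hT w s)) + ∫ s in 0..t, h₂ (IccExtend hT w s))
  continuous_toFun := by
    have hW : Continuous (IccExtend hT w) := w.continuous.Icc_extend'
    have hI₁ := intervalIntegral.continuous_primitive
      (fun a b => (hh₁.comp hW).intervalIntegrable (μ := volume) a b) 0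
    have hI₂ := intervalIntegral.continuous_primitive
      (fun a b => (hh₂.comp hW).intervalIntegrable (μ := volume) a b) 0
    have hx := hu.domRestrict.add (hI₁.comp continuous_subtype_val)
    exact hx.prodMk ((hv.domRestrict.add (hg.comp hx)).add (hI₂.comp continuous_subtype_val))

variable {K₁ K₂ K₃ : ℝ≥0}

theorem volterraLipschitzWith_picardMap (hT : 0 ≤ T) (hu : ContinuousOn u (Icc 0 T))
    (hv : ContinuousOn v (Icc 0 T)) (hh₁ : LipschitzWith K₁ h₁) (hh₂ : LipschitzWith K₂ h₂)
    (hg : LipschitzWith K₃ g) :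
    VolterraLipschitzWith hT (K₁ + K₃ * K₁ + K₂)
      (picardMap hT hu hv hh₁.continuous hh₂.continuous hg.continuous) := by
  intro w w' t
  have hW := w.continuous.Icc_extend' (h := hT)
  have hW' := w'.continuous.Icc_extend' (h := hT)
  set J := ∫ s in 0..t, dist (IccExtend hT w s) (IccExtend hT w' s)
  have hJ : 0 ≤ J := intervalIntegral.integral_nonneg t.2.1 fun _ _ => dist_nonneg
  have hx : dist (u t + ∫ s in 0..t, h₁ (IccExtend hT w s))
      (u t + ∫ s in 0..t, h₁ (IccExtend hT w' s)) ≤ K₁ * J := by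
    rw [dist_add_left]
    exact hh₁.dist_intervalIntegral_comp_le hW hW' t.2.1
  have hz := hh₂.dist_intervalIntegral_comp_le hW hW' t.2.1
  have hgx := hg.dist_le_mul (u t + ∫ s in 0..t, h₁ (IccExtend hT w s))
    (u t + ∫ s in 0..t, h₁ (IccExtend hT w' s))
  push_cast
  refine max_le (hx.trans ?_) ?_
  · nlinarith [mul_nonneg (mul_nonneg K₃.coe_nonneg K₁.coe_nonneg) hJ, mul_nonneg K₂.coe_nonneg hJ]
  · refine (dist_add_add_le _ _ _ _).trans ?_
    rw [dist_add_left]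
    nlinarith [mul_le_mul_of_nonneg_left hx K₃.coe_nonneg]

theorem isFixedPt_picardMap_iff (hT : 0 ≤ T) (hu : ContinuousOn u (Icc 0 T))
    (hv : ContinuousOn v (Icc 0 T)) (hh₁ : Continuous h₁) (hh₂ : Continuous h₂) (hg : Continuous g)
    (w : C(Icc 0 T, X × Z)) :
    IsFixedPt (picardMap hT hu hv hh₁ hh₂ hg) w ↔
      IsSolution T u v h₁ h₂ g (fun t => (IccExtend hT w t).1) (fun t => (IccExtend hT w t).2) := by
  rw [IsFixedPt, ContinuousMap.ext_iff, Subtype.forall]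
  refine forall₂_congr fun t ht => ?_
  dsimp only
  rw [IccExtend_of_mem hT w ht, eq_comm, Prod.ext_iff]
  exact and_congr_right fun hx => by rw [hx]; exact Iff.rfl

theorem exists_unique_isSolution [CompleteSpace X] [CompleteSpace Z] (hT : 0 ≤ T)
    (hu : ContinuousOn u (Icc 0 T)) (hv : ContinuousOn v (Icc 0 T)) (hh₁ : LipschitzWith K₁ h₁)
    (hh₂ : LipschitzWith K₂ h₂) (hg : LipschitzWith K₃ g) :
    ∃ x z, ContinuousOn x (Icc 0 T) ∧ ContinuousOn z (Icc 0 T) ∧ IsSolution T u v h₁ h₂ g x z ∧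
      ∀ x' z', ContinuousOn x' (Icc 0 T) → ContinuousOn z' (Icc 0 T) →
        IsSolution T u v h₁ h₂ g x' z' → EqOn x' x (Icc 0 T) ∧ EqOn z' z (Icc 0 T) := by
  have hfix := isFixedPt_picardMap_iff hT hu hv hh₁.continuous hh₂.continuous hg.continuous
  obtain ⟨w, hw, huniq⟩ :=
    (volterraLipschitzWith_picardMap hT hu hv hh₁ hh₂ hg).exists_unique_isFixedPt
  have hW : Continuous (IccExtend hT w) := w.continuous.Icc_extend'
  refine ⟨_, _, hW.fst.continuousOn, hW.snd.continuousOn, (hfix w).1 hw,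
    fun x' z' hx' hz' hsol => ?_⟩
  set w' : C(Icc 0 T, X × Z) := ⟨fun t => (x' t, z' t), hx'.domRestrict.prodMk hz'.domRestrict⟩
  have hx'w' : EqOn x' (fun t => (IccExtend hT w' t).1) (Icc 0 T) := fun t ht => by
    simp only [IccExtend_of_mem hT w' ht]; rfl
  have hz'w' : EqOn z' (fun t => (IccExtend hT w' t).2) (Icc 0 T) := fun t ht => by
    simp only [IccExtend_of_mem hT w' ht]; rfl
  obtain rfl : w' = w := huniq w' ((hfix w').2 (hsol.congr hx'w' hz'w'))
  exact ⟨hx'w', hz'w'⟩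

end IntegralSystem

section FiniteDimensional

variable {E F : Type*} [NormedAddCommGroup E] [NormedSpace ℝ E] [FiniteDimensional ℝ E]
  [NormedAddCommGroup F] [NormedSpace ℝ F] {f : E → F}

theorem IsLinearMap.exists_lipschitzWith (hf : IsLinearMap ℝ f) : ∃ K, LipschitzWith K f :=
  ⟨_, (LinearMap.toContinuousLinearMap (hf.mk' f)).lipschitz⟩

theorem IsLinearMap.intervalIntegral_comp_comm [CompleteSpace F] (hf : IsLinearMap ℝ f)
    {φ : ℝ → E} {a b : ℝ} (hφ : IntervalIntegrable φ volume a b) :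
    ∫ s in a..b, f (φ s) = f (∫ s in a..b, φ s) :=
  (LinearMap.toContinuousLinearMap (hf.mk' f)).intervalIntegral_comp_comm hφ

end FiniteDimensional

theorem intervalIntegral.integral_eq_fun_integral_eval {ι : Type*} [Fintype ι] {φ : ℝ → ι → ℝ}
    {a b : ℝ} (hφ : IntervalIntegrable φ volume a b) :
    ∫ s in a..b, φ s = fun j => ∫ s in a..b, φ s j :=
  funext fun j =>
    ((ContinuousLinearMap.proj (R := ℝ) (φ := fun _ => ℝ) j).intervalIntegral_comp_comm hφ).symm

theorem Matrix.isLinearMap_sum_mulVec {m n S : Type*} [Fintype m] [Fintype n] [CommSemiring S]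
    (A : Matrix m n S) : IsLinearMap S fun z : n → S => ∑ i, (A *ᵥ z) i :=
  ⟨fun z z' => by simp only [mulVec_add, Pi.add_apply, Finset.sum_add_distrib],
    fun c z => by simp only [mulVec_smul, Pi.smul_apply, smul_eq_mul, Finset.mul_sum]⟩

namespace PhiSystem

variable {K : ℕ} (α : ℝ) (p : Fin K → ℝ) (R : Matrix (Fin K) (Fin K) ℝ)

def h₁ (w : ℝ × (Fin K → ℝ)) : ℝ := -(α * max w.1 0) - ∑ i, (R *ᵥ w.2) i

def h₂ (w : ℝ × (Fin K → ℝ)) : Fin K → ℝ := -(((1 - of fun i _ => p i) * R) *ᵥ w.2)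

def g (x : ℝ) : Fin K → ℝ := -(max (-x) 0 • p)

theorem exists_lipschitzWith_h₁ : ∃ L, LipschitzWith L (h₁ α R) := by
  obtain ⟨L, hL⟩ := (isLinearMap_sum_mulVec R).exists_lipschitzWith
  exact ⟨_, ((lipschitzWith_smul α).comp (LipschitzWith.prod_fst.max_const 0)).neg.sub
    (hL.comp LipschitzWith.prod_snd)⟩

theorem exists_lipschitzWith_h₂ : ∃ L, LipschitzWith L (h₂ p R) := by
  obtain ⟨L, hL⟩ := (mulVecLin ((1 - of fun i _ => p i) * R)).isLinear.exists_lipschitzWith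
  exact ⟨_, (hL.comp LipschitzWith.prod_snd).neg⟩

theorem exists_lipschitzWith_g : ∃ L, LipschitzWith L (g p) := by
  obtain ⟨L, hL⟩ := (IsLinearMap.isLinearMap_smul' (R := ℝ) p).exists_lipschitzWith
  exact ⟨_, (hL.comp (LipschitzWith.id.neg.max_const 0)).neg⟩

variable {T t : ℝ} {x : ℝ → ℝ} {z : ℝ → Fin K → ℝ} {u : ℝ → ℝ} {v : ℝ → Fin K → ℝ}

theorem integral_h₁ (hx : ContinuousOn x (uIcc 0 t)) (hz : ContinuousOn z (uIcc 0 t)) :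
    ∫ s in 0..t, h₁ α R (x s, z s) =
      -(α * ∫ s in 0..t, max (x s) 0) - ∑ i, (R *ᵥ fun j => ∫ s in 0..t, z s j) i := by
  unfold h₁
  rw [intervalIntegral.integral_sub (by fun_prop : ContinuousOn _ _).intervalIntegrable
      (by fun_prop : ContinuousOn _ _).intervalIntegrable,
    intervalIntegral.integral_neg, intervalIntegral.integral_const_mul,
    (isLinearMap_sum_mulVec R).intervalIntegral_comp_comm hz.intervalIntegrable,
    intervalIntegral.integral_eq_fun_integral_eval hz.intervalIntegrable]

theorem integral_h₂ (hz : ContinuousOn z (uIcc 0 t)) :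
    ∫ s in 0..t, h₂ p R (x s, z s) =
      -(((1 - of fun i _ => p i) * R) *ᵥ fun j => ∫ s in 0..t, z s j) := by
  unfold h₂
  rw [intervalIntegral.integral_neg,
    (mulVecLin _).isLinear.intervalIntegral_comp_comm hz.intervalIntegrable,
    intervalIntegral.integral_eq_fun_integral_eval hz.intervalIntegrable]

theorem isSolution_iff (hx : ContinuousOn x (Icc 0 T)) (hz : ContinuousOn z (Icc 0 T)) :
    IntegralSystem.IsSolution T u v (h₁ α R) (h₂ p R) (g p) x z ↔
      (∀ t ∈ Icc 0 T,
        x t = u t - α * (∫ s in 0..t, max (x s) 0) - ∑ i, (R *ᵥ fun j => ∫ s in 0..t, z s j) i) ∧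
      (∀ t ∈ Icc 0 T, ∀ k,
        z t k = v t k - p k * max (-(x t)) 0
          - (((1 - of fun i _ => p i) * R) *ᵥ fun j => ∫ s in 0..t, z s j) k) := by
  rw [IntegralSystem.IsSolution, ← forall₂_and]
  refine forall₂_congr fun t ht => ?_
  have hsub : uIcc 0 t ⊆ Icc 0 T := uIcc_subset_Icc (left_mem_Icc.2 (ht.1.trans ht.2)) ht
  rw [integral_h₁ α R (hx.mono hsub) (hz.mono hsub), integral_h₂ p R (hz.mono hsub), funext_iff]
  refine and_congr (Iff.of_eq (congrArg (x t = ·) (by ring))) (forall_congr' fun k => ?_)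
  refine Iff.of_eq (congrArg (z t k = ·) ?_)
  simp only [g, Pi.add_apply, Pi.neg_apply, Pi.smul_apply, smul_eq_mul]
  ring

end PhiSystem

theorem exists_unique_Phi_solution_general {K : ℕ} (T : ℝ) (hT : 0 < T)
    (α : ℝ) (p : Fin K → ℝ)
    (R : Matrix (Fin K) (Fin K) ℝ)
    (u : ℝ → ℝ) (v : ℝ → Fin K → ℝ)
    (hu : ContinuousOn u (Icc 0 T)) (hv : ContinuousOn v (Icc 0 T)) :
    ∃ x : ℝ → ℝ, ∃ z : ℝ → Fin K → ℝ,
      ContinuousOn x (Icc 0 T) ∧ ContinuousOn z (Icc 0 T) ∧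
      (∀ t ∈ Icc (0:ℝ) T,
        x t = u t - α * (∫ s in (0:ℝ)..t, max (x s) 0)
          - ∑ i, (R *ᵥ fun j => ∫ s in (0:ℝ)..t, z s j) i) ∧
      (∀ t ∈ Icc (0:ℝ) T, ∀ k,
        z t k = v t k - p k * max (-(x t)) 0
          - (((1 - Matrix.of fun i _ => p i) * R) *ᵥ fun j => ∫ s in (0:ℝ)..t, z s j) k) ∧
      (∀ x' : ℝ → ℝ, ∀ z' : ℝ → Fin K → ℝ,
        ContinuousOn x' (Icc 0 T) → ContinuousOn z' (Icc 0 T) →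
        (∀ t ∈ Icc (0:ℝ) T,
          x' t = u t - α * (∫ s in (0:ℝ)..t, max (x' s) 0)
            - ∑ i, (R *ᵥ fun j => ∫ s in (0:ℝ)..t, z' s j) i) →
        (∀ t ∈ Icc (0:ℝ) T, ∀ k,
          z' t k = v t k - p k * max (-(x' t)) 0
            - (((1 - Matrix.of fun i _ => p i) * R) *ᵥ fun j => ∫ s in (0:ℝ)..t, z' s j) k) →
        ∀ t ∈ Icc (0:ℝ) T, x' t = x t ∧ z' t = z t) := by
  obtain ⟨L₁, hL₁⟩ := PhiSystem.exists_lipschitzWith_h₁ α R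
  obtain ⟨L₂, hL₂⟩ := PhiSystem.exists_lipschitzWith_h₂ p R
  obtain ⟨L₃, hL₃⟩ := PhiSystem.exists_lipschitzWith_g p
  obtain ⟨x, z, hx, hz, hsol, huniq⟩ :=
    IntegralSystem.exists_unique_isSolution hT.le hu hv hL₁ hL₂ hL₃
  obtain ⟨hsol₁, hsol₂⟩ := (PhiSystem.isSolution_iff α p R hx hz).1 hsol
  refine ⟨x, z, hx, hz, hsol₁, hsol₂, fun x' z' hx' hz' hsol₁' hsol₂' t ht => ?_⟩
  obtain ⟨hx'x, hz'z⟩ :=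
    huniq x' z' hx' hz' ((PhiSystem.isSolution_iff α p R hx' hz').2 ⟨hsol₁', hsol₂'⟩)
  exact ⟨hx'x ht, hz'z ht⟩

/-- existence and uniqueness of continuous solutions of the system
`x(t) = u(t) − α∫₀ᵗ x(s)⁺ ds − eᵀR∫₀ᵗ z(s) ds`,
`z(t) = v(t) − p x(t)⁻ − (I − p eᵀ)R ∫₀ᵗ z(s) ds` on `[0, T]`. -/
theorem exists_unique_Phi_solution {K : ℕ} (hK : 1 ≤ K) (T : ℝ) (hT : 0 < T)
    (α : ℝ) (hα : 0 ≤ α) (p : Fin K → ℝ) (hp : ∀ k, 0 ≤ p k) (hpsum : ∑ k, p k = 1)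
    (R : Matrix (Fin K) (Fin K) ℝ)
    (u : ℝ → ℝ) (v : ℝ → Fin K → ℝ)
    (hu : ContinuousOn u (Icc 0 T)) (hv : ContinuousOn v (Icc 0 T)) :
    ∃ x : ℝ → ℝ, ∃ z : ℝ → Fin K → ℝ,
      ContinuousOn x (Icc 0 T) ∧ ContinuousOn z (Icc 0 T) ∧
      (∀ t ∈ Icc (0:ℝ) T,
        x t = u t - α * (∫ s in (0:ℝ)..t, max (x s) 0)
          - ∑ i, (R *ᵥ fun j => ∫ s in (0:ℝ)..t, z s j) i) ∧
      (∀ t ∈ Icc (0:ℝ) T, ∀ k,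
        z t k = v t k - p k * max (-(x t)) 0
          - (((1 - Matrix.of fun i _ => p i) * R) *ᵥ fun j => ∫ s in (0:ℝ)..t, z s j) k) ∧
      (∀ x' : ℝ → ℝ, ∀ z' : ℝ → Fin K → ℝ,
        ContinuousOn x' (Icc 0 T) → ContinuousOn z' (Icc 0 T) →
        (∀ t ∈ Icc (0:ℝ) T,
          x' t = u t - α * (∫ s in (0:ℝ)..t, max (x' s) 0)
            - ∑ i, (R *ᵥ fun j => ∫ s in (0:ℝ)..t, z' s j) i) →
        (∀ t ∈ Icc (0:ℝ) T, ∀ k,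
          z' t k = v t k - p k * max (-(x' t)) 0
            - (((1 - Matrix.of fun i _ => p i) * R) *ᵥ fun j => ∫ s in (0:ℝ)..t, z' s j) k) →
        ∀ t ∈ Icc (0:ℝ) T, x' t = x t ∧ z' t = z t) :=
  exists_unique_Phi_solution_general T hT α p R u v hu hv
end
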